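/- Σ_{ab ≤ N} d(gcd(a,b)) = O(N log N), where the sum is over all pairs of positive integers (a,b) with ab ≤ N, gcd(a,b) is the greatest common divisor of a and b, and d(n) denotes the number of positive divisors of n. -/

import Mathlib

/-!
Counting the divisor `e` of `gcd(a, b)` instead of the pair, the sum equals
`∑_{e ≤ N} #{(a, b) : e ∣ a, e ∣ b, ab ≤ N}`, and writing `a = e a'`, `b = e b'` the `e`-th term
is the number of lattice points under the hyperbola `a' b' ≤ N / e²`. That number is at most
`(N / e²) (1 + log N)` by the harmonic bound, and `∑ 1 / e² ≤ 2`.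
-/

open Finset Real

def mulLePairs (N : ℕ) : Finset (ℕ × ℕ) :=
  {p ∈ Icc 1 N ×ˢ Icc 1 N | p.1 * p.2 ≤ N}

lemma mem_mulLePairs {N : ℕ} {p : ℕ × ℕ} :
    p ∈ mulLePairs N ↔ 0 < p.1 ∧ 0 < p.2 ∧ p.1 * p.2 ≤ N := by
  simp only [mulLePairs, mem_filter, mem_product, mem_Icc]
  constructor
  · rintro ⟨⟨⟨h1, -⟩, h2, -⟩, h⟩
    exact ⟨h1, h2, h⟩
  · rintro ⟨h1, h2, h⟩
    exact ⟨⟨⟨h1, (Nat.le_mul_of_pos_right _ h2).trans h⟩,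
      h2, (Nat.le_mul_of_pos_left _ h1).trans h⟩, h⟩

lemma card_mulLePairs (N : ℕ) : #(mulLePairs N) = ∑ a ∈ Icc 1 N, N / a := by
  rw [mulLePairs, card_filter, sum_product]
  refine sum_congr rfl fun a ha => ?_
  have ha : 0 < a := (mem_Icc.mp ha).1
  rw [← card_filter, ← Nat.add_sub_cancel (N / a) 1, ← Nat.card_Icc]
  congr 1
  ext b
  simp only [mem_filter, mem_Icc, Nat.le_div_iff_mul_le ha, mul_comm b]
  constructor
  · rintro ⟨⟨h1, -⟩, h⟩
    exact ⟨h1, h⟩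
  · rintro ⟨h1, h⟩
    exact ⟨⟨h1, (Nat.le_mul_of_pos_left _ ha).trans h⟩, h⟩

lemma card_mulLePairs_le (N : ℕ) : (#(mulLePairs N) : ℝ) ≤ N * (1 + log N) :=
  calc (#(mulLePairs N) : ℝ) = ∑ a ∈ Icc 1 N, ((N / a : ℕ) : ℝ) := by
        rw [card_mulLePairs, Nat.cast_sum]
    _ ≤ ∑ a ∈ Icc 1 N, (N : ℝ) * (a : ℝ)⁻¹ := sum_le_sum fun _ _ => Nat.cast_div_le
    _ = N * harmonic N := by
        simp [← mul_sum, harmonic_eq_sum_Icc]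
    _ ≤ N * (1 + log N) := by gcongr; exact harmonic_le_one_add_log N

lemma card_divisors_gcd_eq_card_filter {a b N : ℕ} (ha : 0 < a) (haN : a ≤ N) :
    #(Nat.gcd a b).divisors = #{e ∈ Icc 1 N | e ∣ a ∧ e ∣ b} := by
  congr 1
  ext e
  simp only [Nat.mem_divisors, Nat.dvd_gcd_iff, mem_filter, mem_Icc]
  constructor
  · rintro ⟨hdvd, -⟩
    exact ⟨⟨Nat.pos_of_dvd_of_pos hdvd.1 ha, (Nat.le_of_dvd ha hdvd.1).trans haN⟩, hdvd⟩
  · rintro ⟨-, hdvd⟩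
    exact ⟨hdvd, (Nat.gcd_pos_of_pos_left b ha).ne'⟩

lemma card_filter_dvd_mulLePairs_le (N e : ℕ) :
    #{p ∈ mulLePairs N | e ∣ p.1 ∧ e ∣ p.2} ≤ #(mulLePairs (N / (e * e))) := by
  have hsub : {p ∈ mulLePairs N | e ∣ p.1 ∧ e ∣ p.2} ⊆
      (mulLePairs (N / (e * e))).image fun q => (e * q.1, e * q.2) := by
    rintro ⟨_, _⟩ hp
    obtain ⟨hp, ⟨a, rfl⟩, ⟨b, rfl⟩⟩ := mem_filter.mp hp
    obtain ⟨ha, hb, hab⟩ := mem_mulLePairs.mp hp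
    have he : 0 < e := Nat.pos_of_mul_pos_right ha
    refine mem_image.mpr ⟨(a, b), mem_mulLePairs.mpr ⟨Nat.pos_of_mul_pos_left ha,
      Nat.pos_of_mul_pos_left hb, ?_⟩, rfl⟩
    rw [Nat.le_div_iff_mul_le (Nat.mul_pos he he)]
    calc a * b * (e * e) = e * a * (e * b) := by ring
      _ ≤ N := hab
  exact (card_le_card hsub).trans card_image_le

lemma sum_card_divisors_gcd_eq (N : ℕ) :
    ∑ p ∈ mulLePairs N, #(Nat.gcd p.1 p.2).divisors =
      ∑ e ∈ Icc 1 N, #{p ∈ mulLePairs N | e ∣ p.1 ∧ e ∣ p.2} := by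
  refine (sum_congr rfl fun p hp => ?_).trans
    (sum_card_bipartiteAbove_eq_sum_card_bipartiteBelow (fun (p : ℕ × ℕ) e => e ∣ p.1 ∧ e ∣ p.2))
  obtain ⟨h1, h2, h⟩ := mem_mulLePairs.mp hp
  exact card_divisors_gcd_eq_card_filter h1 ((Nat.le_mul_of_pos_right _ h2).trans h)

lemma sum_Icc_inv_sq_le_two (N : ℕ) : ∑ e ∈ Icc 1 N, ((e : ℝ) ^ 2)⁻¹ ≤ 2 := by
  have hIcc : Icc 1 N = Ioo 0 (N + 1) := by ext; simp; omega
  simpa [hIcc] using sum_Ioo_inv_sq_le (α := ℝ) 0 (N + 1)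

lemma card_mulLePairs_div_mul_self_le (N e : ℕ) :
    (#(mulLePairs (N / (e * e))) : ℝ) ≤ N * (1 + log N) * ((e : ℝ) ^ 2)⁻¹ :=
  calc (#(mulLePairs (N / (e * e))) : ℝ)
      ≤ ((N / (e * e) : ℕ) : ℝ) * (1 + log ((N / (e * e) : ℕ) : ℝ)) := card_mulLePairs_le _
    _ ≤ ((N / (e * e) : ℕ) : ℝ) * (1 + log N) := by
        rcases (N / (e * e)).eq_zero_or_pos with h | h
        · simp [h]
        · gcongr
          exact_mod_cast Nat.div_le_self N (e * e)
    _ ≤ N / ((e * e : ℕ) : ℝ) * (1 + log N) := by gcongr; exact Nat.cast_div_le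
    _ = N * (1 + log N) * ((e : ℝ) ^ 2)⁻¹ := by push_cast; ring

lemma sum_card_divisors_gcd_le (N : ℕ) :
    (∑ p ∈ mulLePairs N, (#(Nat.gcd p.1 p.2).divisors : ℝ)) ≤ 2 * N * (1 + log N) :=
  calc (∑ p ∈ mulLePairs N, (#(Nat.gcd p.1 p.2).divisors : ℝ))
      ≤ ∑ e ∈ Icc 1 N, (#(mulLePairs (N / (e * e))) : ℝ) := by
        rw [← Nat.cast_sum, sum_card_divisors_gcd_eq, Nat.cast_sum]
        exact sum_le_sum fun e _ => by exact_mod_cast card_filter_dvd_mulLePairs_le N e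
    _ ≤ ∑ e ∈ Icc 1 N, N * (1 + log N) * ((e : ℝ) ^ 2)⁻¹ :=
        sum_le_sum fun e _ => card_mulLePairs_div_mul_self_le N e
    _ ≤ N * (1 + log N) * 2 := by
        rw [← mul_sum]
        exact mul_le_mul_of_nonneg_left (sum_Icc_inv_sq_le_two N) (by positivity)
    _ = 2 * N * (1 + log N) := by ring

theorem sum_divisors_gcd_bigO :
    ∃ C : ℝ, C > 0 ∧ ∀ᶠ N : ℕ in Filter.atTop,
      (∑ p ∈ (Finset.Icc 1 N ×ˢ Finset.Icc 1 N).filter (fun p => p.1 * p.2 ≤ N),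
          ((Nat.gcd p.1 p.2).divisors.card : ℝ))
        ≤ C * N * Real.log N := by
  refine ⟨4, by norm_num, ?_⟩
  filter_upwards [Filter.eventually_ge_atTop 3] with N hN
  have hlog : 1 ≤ log N := by
    rw [le_log_iff_exp_le (by positivity)]
    exact exp_one_lt_three.le.trans (by exact_mod_cast hN)
  calc _ ≤ 2 * N * (1 + log N) := sum_card_divisors_gcd_le N
    _ ≤ 4 * N * log N := by nlinarith [(Nat.cast_nonneg N : (0 : ℝ) ≤ N)]
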